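/- Let F : C → D be a Krull–Schmidt functor between Krull–Schmidt categories, and let A and B be objects of C with maximal F-dense decompositions A ≅ A_F ⊕ A_0 and B ≅ B_F ⊕ B_0, with associated inclusion morphisms i_A : A_F → A, i_B : B_F → B and projection morphisms π_A : A → A_F, π_B : B → B_F. Suppose f : A → B and g : B → A are morphisms such that F(f) and F(g) are mutually inverse isomorphisms. Then the composites f' := π_B ∘ f ∘ i_A : A_F → B_F and g' := π_A ∘ g ∘ i_B : B_F → A_F are isomorphisms. -/

import Mathlib

open CategoryTheory CategoryTheory.Limits

universe v₁ v₂ u₁ u₂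

attribute [local instance] CategoryTheory.Limits.hasBinaryBiproducts_of_finite_biproducts

/-- The Jacobson radical of a (possibly noncommutative) ring, as a set:
those `x` such that `1 - y * x` is a unit for every `y`. -/
def jacobsonRadicalSet (R : Type*) [Ring R] : Set R :=
  {x | ∀ y : R, IsUnit (1 - y * x)}

variable {C : Type u₁} [Category.{v₁} C] [Preadditive C] [HasFiniteBiproducts C]
variable {D : Type u₂} [Category.{v₂} D] [Preadditive D] [HasFiniteBiproducts D]

/-- An object is indecomposable if it is nonzero and in any biproduct
decomposition one of the two factors is zero. -/
def IsIndecomposable (X : C) : Prop :=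
  ¬ IsZero X ∧ ∀ Y Z : C, Nonempty (X ≅ Y ⊞ Z) → IsZero Y ∨ IsZero Z

/-- `A'` is a direct summand of `A`. -/
def IsSummand (A A' : C) : Prop :=
  ∃ A'' : C, Nonempty (A ≅ A' ⊞ A'')

/-- A Krull–Schmidt category: every object is isomorphic to a finite biproduct of
indecomposable objects, each having a local endomorphism ring. -/
def IsKrullSchmidtCat (C : Type u₁) [Category.{v₁} C] [Preadditive C]
    [HasFiniteBiproducts C] : Prop :=
  ∀ A : C, ∃ (n : ℕ) (X : Fin n → C),
    (∀ i, IsIndecomposable (X i) ∧ IsLocalRing (End (X i))) ∧ Nonempty (A ≅ ⨁ X)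

/-- A Krull–Schmidt functor: for every indecomposable object `A`, the induced map
`End A → End (F A)` sends the Jacobson radical into the Jacobson radical. -/
def IsKrullSchmidtFunctor (F : C ⥤ D) : Prop :=
  ∀ A : C, IsIndecomposable A →
    ∀ μ : End A, μ ∈ jacobsonRadicalSet (End A) →
      (F.map μ : End (F.obj A)) ∈ jacobsonRadicalSet (End (F.obj A))

/-- An object `A` is `F`-dense if `F` sends every nonzero direct summand of `A`
to a nonzero object. -/
def IsFDense (F : C ⥤ D) (A : C) : Prop :=
  ∀ A' : C, IsSummand A A' → ¬ IsZero A' → ¬ IsZero (F.obj A')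


/-!
As `F` kills the indecomposable summands of `A_0` and `B_0`, it kills `A_0` and `B_0`, so
`F(i_A)`, `F(π_A)` are mutually inverse (likewise for `B`) and `F(f' ≫ g') = 𝟙`,
`F(g' ≫ f') = 𝟙`. On an `F`-dense object of a Krull–Schmidt category, an endomorphism `u` with
`F(u) = 𝟙` is an automorphism: on an indecomposable summand `X`, `𝟙 - u` is not a unit of the
local ring `End X` because `F(X) ≠ 0`, so `u` is one; and the property passes to `X ⊞ Y` by
Gaussian elimination, since `F` also sends the Schur complement of `u` to `𝟙`. Hence `f' ≫ g'`
and `g' ≫ f'` are isomorphisms, and so are `f'` and `g'`.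
-/

section General

variable {𝒜 : Type*} [Category 𝒜] {ℬ : Type*} [Category ℬ]

theorem isIso_of_isIso_comp_of_isIso_comp {X Y : 𝒜} (f : X ⟶ Y) (g : Y ⟶ X) [IsIso (f ≫ g)]
    [IsIso (g ≫ f)] : IsIso f :=
  have : IsSplitEpi f := ⟨⟨inv (g ≫ f) ≫ g, by simp⟩⟩
  have : Mono f := mono_of_mono f g
  isIso_of_mono_of_isSplitEpi f

/-- Equivalently, the endomorphisms of `A` killed by `F` lie in the Jacobson radical of
`End A`. -/
def ReflectsIsoOfMapEqId (F : 𝒜 ⥤ ℬ) (A : 𝒜) : Prop :=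
  ∀ u : A ⟶ A, F.map u = 𝟙 (F.obj A) → IsIso u

theorem ReflectsIsoOfMapEqId.of_iso {F : 𝒜 ⥤ ℬ} {A A' : 𝒜} (e : A ≅ A')
    (h : ReflectsIsoOfMapEqId F A) : ReflectsIsoOfMapEqId F A' := fun u hu => by
  have : IsIso (e.hom ≫ u ≫ e.inv) := h _ (by simp [hu])
  simpa using (inferInstance : IsIso (e.inv ≫ (e.hom ≫ u ≫ e.inv) ≫ e.hom))

variable [Preadditive 𝒜]

noncomputable def biproductIsoBiprodNe [HasFiniteBiproducts 𝒜] {ι : Type} [Fintype ι]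
    [DecidableEq ι] (X : ι → 𝒜) (i : ι) : ⨁ X ≅ X i ⊞ ⨁ (fun j : {j // j ≠ i} => X j) where
  hom := biprod.lift (biproduct.π X i) (biproduct.lift fun j => biproduct.π X j)
  inv := biprod.desc (biproduct.ι X i) (biproduct.desc fun j => biproduct.ι X j)
  hom_inv_id := by
    rw [biprod.lift_desc, biproduct.lift_desc, ← biproduct.total,
      Fintype.sum_eq_add_sum_subtype_ne _ i]
  inv_hom_id := by
    ext <;> simp [biproduct.ι_π, Subtype.ext_iff, fun j : {j // j ≠ i} => j.2,
      fun j : {j // j ≠ i} => j.2.symm]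

theorem Biprod.isIso_ofComponents [HasBinaryBiproducts 𝒜] {X₁ X₂ Y₁ Y₂ : 𝒜} (f₁₁ : X₁ ⟶ Y₁)
    (f₁₂ : X₁ ⟶ Y₂) (f₂₁ : X₂ ⟶ Y₁) (f₂₂ : X₂ ⟶ Y₂) [IsIso f₁₁]
    [IsIso (f₂₂ - f₂₁ ≫ inv f₁₁ ≫ f₁₂)] : IsIso (Biprod.ofComponents f₁₁ f₁₂ f₂₁ f₂₂) := by
  obtain ⟨L, R, w⟩ : ∃ (L : X₁ ⊞ X₂ ≅ X₁ ⊞ X₂) (R : Y₁ ⊞ Y₂ ≅ Y₁ ⊞ Y₂),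
      L.hom ≫ Biprod.ofComponents f₁₁ f₁₂ f₂₁ f₂₂ ≫ R.hom =
        biprod.map f₁₁ (f₂₂ - f₂₁ ≫ inv f₁₁ ≫ f₁₂) :=
    ⟨_, _, (Biprod.gaussian' f₁₁ f₁₂ f₂₁ f₂₂).2.2.2⟩
  have : IsIso (L.hom ≫ Biprod.ofComponents f₁₁ f₁₂ f₂₁ f₂₂ ≫ R.hom) :=
    w ▸ inferInstanceAs (IsIso (biprod.mapIso (asIso _) (asIso _)).hom)
  simpa using (inferInstance :
    IsIso (L.inv ≫ (L.hom ≫ Biprod.ofComponents f₁₁ f₁₂ f₂₁ f₂₂ ≫ R.hom) ≫ R.inv))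

namespace ReflectsIsoOfMapEqId

variable [Preadditive ℬ] {F : 𝒜 ⥤ ℬ} [F.Additive]

theorem of_isLocalRing {X : 𝒜} [IsLocalRing (End X)] (hX : ¬ IsZero (F.obj X)) :
    ReflectsIsoOfMapEqId F X := fun u hu => by
  have hsum := add_sub_cancel (u : End X) (1 : End X)
  refine (isUnit_iff_isIso u).mp
    ((IsLocalRing.isUnit_or_isUnit_of_add_one hsum).resolve_right fun h => ?_)
  have : IsIso (𝟙 X - u) := (isUnit_iff_isIso _).mp h
  have : IsIso (F.map (𝟙 X - u)) := inferInstance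
  rw [F.map_sub, F.map_id, hu, sub_self] at this
  exact hX ((IsZero.iff_id_eq_zero _).mpr (isIsoZeroSelfEquiv _ this))

theorem biprod [HasBinaryBiproducts 𝒜] {X Y : 𝒜} (hX : ReflectsIsoOfMapEqId F X)
    (hY : ReflectsIsoOfMapEqId F Y) : ReflectsIsoOfMapEqId F (X ⊞ Y) := fun u hu => by
  have h₁₁ : F.map (biprod.inl ≫ u ≫ biprod.fst) = 𝟙 _ := by
    simp only [F.map_comp, hu, Category.id_comp, ← F.map_comp, biprod.inl_fst, F.map_id]
  have h₂₁ : F.map (biprod.inr ≫ u ≫ biprod.fst) = 0 := by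
    simp only [F.map_comp, hu, Category.id_comp, ← F.map_comp, biprod.inr_fst, F.map_zero]
  have h₂₂ : F.map (biprod.inr ≫ u ≫ biprod.snd) = 𝟙 _ := by
    simp only [F.map_comp, hu, Category.id_comp, ← F.map_comp, biprod.inr_snd, F.map_id]
  have := hX _ h₁₁
  have := hY (biprod.inr ≫ u ≫ biprod.snd - (biprod.inr ≫ u ≫ biprod.fst) ≫
      inv (biprod.inl ≫ u ≫ biprod.fst) ≫ biprod.inl ≫ u ≫ biprod.snd)
    (by rw [F.map_sub, h₂₂, F.map_comp, h₂₁, zero_comp, sub_zero])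
  exact Biprod.ofComponents_eq u ▸ Biprod.isIso_ofComponents _ _ _ _

theorem biproduct [HasFiniteBiproducts 𝒜] {ι : Type} [Fintype ι] (X : ι → 𝒜)
    (hX : ∀ i, ReflectsIsoOfMapEqId F (X i)) : ReflectsIsoOfMapEqId F (⨁ X) := by
  classical
  induction hn : Fintype.card ι using Nat.strong_induction_on generalizing ι with
  | _ n ih =>
    rcases isEmpty_or_nonempty ι with _ | ⟨⟨i⟩⟩
    · intro u _
      rw [show u = 𝟙 _ from biproduct.hom_ext _ _ isEmptyElim]
      infer_instance
    · have hcard : Fintype.card {j // j ≠ i} < n :=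
        hn ▸ Fintype.card_subtype_lt (x := i) (by simp)
      exact ((hX i).biprod (ih _ hcard (fun j : {j // j ≠ i} => X j) (fun j => hX j) rfl)).of_iso
        (biproductIsoBiprodNe X i).symm

end ReflectsIsoOfMapEqId

variable [Preadditive ℬ] {F : 𝒜 ⥤ ℬ} [F.Additive]

theorem map_hom_fst_inl_inv_eq_id [HasBinaryBiproducts 𝒜] {A X Y : 𝒜} (e : A ≅ X ⊞ Y)
    (hY : IsZero (F.obj Y)) : F.map (e.hom ≫ biprod.fst ≫ biprod.inl ≫ e.inv) = 𝟙 (F.obj A) := by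
  have : e.hom ≫ biprod.fst ≫ biprod.inl ≫ e.inv + (e.hom ≫ biprod.snd) ≫ biprod.inr ≫ e.inv
      = 𝟙 A := by
    have := congrArg (fun t => e.hom ≫ t ≫ e.inv) (biprod.total (X := X) (Y := Y))
    simpa only [Preadditive.add_comp, Preadditive.comp_add, Category.assoc, Category.id_comp,
      Iso.hom_inv_id] using this
  rw [eq_sub_of_add_eq this, F.map_sub, F.map_id, F.map_comp, hY.eq_of_tgt (F.map _) 0,
    zero_comp, sub_zero]

theorem map_corner_comp_corner_eq_id [HasBinaryBiproducts 𝒜] {A B A_F A_0 B_F B_0 : 𝒜}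
    (eA : A ≅ A_F ⊞ A_0) (eB : B ≅ B_F ⊞ B_0) (hB0 : IsZero (F.obj B_0)) (f : A ⟶ B) (g : B ⟶ A)
    (hfg : F.map f ≫ F.map g = 𝟙 (F.obj A)) :
    F.map (((biprod.inl ≫ eA.inv) ≫ f ≫ (eB.hom ≫ biprod.fst)) ≫
      ((biprod.inl ≫ eB.inv) ≫ g ≫ (eA.hom ≫ biprod.fst))) = 𝟙 (F.obj A_F) := by
  have hB := map_hom_fst_inl_inv_eq_id eB hB0
  simp only [Category.assoc, F.map_comp] at hB ⊢
  rw [reassoc_of% hB, reassoc_of% hfg, ← F.map_comp_assoc, ← F.map_comp, ← F.map_comp]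
  simp

end General

section KrullSchmidt

variable {ℬ : Type*} [Category ℬ] [Preadditive ℬ]

theorem isSummand_biproduct {ι : Type} [Fintype ι] (X : ι → C) (i : ι) :
    IsSummand (⨁ X) (X i) := by
  classical exact ⟨_, ⟨biproductIsoBiprodNe X i⟩⟩

theorem IsSummand.of_iso {A A' X : C} (e : A ≅ A') (h : IsSummand A' X) : IsSummand A X :=
  let ⟨_, ⟨e'⟩⟩ := h
  ⟨_, ⟨e ≪≫ e'⟩⟩

theorem isZero_obj_of_indecomposable_summands {F : C ⥤ ℬ} [F.Additive]
    (hC : IsKrullSchmidtCat C) {A : C}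
    (hA : ∀ X : C, IsIndecomposable X → IsSummand A X → IsZero (F.obj X)) :
    IsZero (F.obj A) := by
  obtain ⟨n, X, hX, ⟨e⟩⟩ := hC A
  refine IsZero.of_iso ?_ (F.mapIso e ≪≫ F.mapBiproduct X)
  rw [IsZero.iff_id_eq_zero]
  exact biproduct.hom_ext _ _ fun i =>
    (hA _ (hX i).1 ((isSummand_biproduct X i).of_iso e)).eq_of_tgt _ _

theorem ReflectsIsoOfMapEqId.of_isFDense {F : C ⥤ ℬ} [F.Additive] (hC : IsKrullSchmidtCat C)
    {A : C} (hA : IsFDense F A) : ReflectsIsoOfMapEqId F A := by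
  obtain ⟨n, X, hX, ⟨e⟩⟩ := hC A
  refine (biproduct X fun i => ?_).of_iso e.symm
  have := (hX i).2
  exact of_isLocalRing (hA _ ((isSummand_biproduct X i).of_iso e) (hX i).1.1)

end KrullSchmidt

theorem statement2_general
    (hC : IsKrullSchmidtCat C)
    (F : C ⥤ D) [F.Additive]
    {A B A_F A_0 B_F B_0 : C}
    (eA : A ≅ A_F ⊞ A_0) (eB : B ≅ B_F ⊞ B_0)
    (hAF : IsFDense F A_F)
    (hA0 : ∀ X : C, IsIndecomposable X → IsSummand A_0 X → IsZero (F.obj X))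
    (hBF : IsFDense F B_F)
    (hB0 : ∀ X : C, IsIndecomposable X → IsSummand B_0 X → IsZero (F.obj X))
    (f : A ⟶ B) (g : B ⟶ A)
    (hfg : F.map f ≫ F.map g = 𝟙 (F.obj A))
    (hgf : F.map g ≫ F.map f = 𝟙 (F.obj B)) :
    -- `i_A = biprod.inl ≫ eA.inv`, `π_B = eB.hom ≫ biprod.fst`, etc.
    IsIso ((biprod.inl ≫ eA.inv) ≫ f ≫ (eB.hom ≫ biprod.fst)) ∧
    IsIso ((biprod.inl ≫ eB.inv) ≫ g ≫ (eA.hom ≫ biprod.fst)) := by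
  set f' := (biprod.inl ≫ eA.inv) ≫ f ≫ (eB.hom ≫ biprod.fst)
  set g' := (biprod.inl ≫ eB.inv) ≫ g ≫ (eA.hom ≫ biprod.fst)
  have : IsIso (f' ≫ g') := ReflectsIsoOfMapEqId.of_isFDense hC hAF _
    (map_corner_comp_corner_eq_id eA eB (isZero_obj_of_indecomposable_summands hC hB0) f g hfg)
  have : IsIso (g' ≫ f') := ReflectsIsoOfMapEqId.of_isFDense hC hBF _
    (map_corner_comp_corner_eq_id eB eA (isZero_obj_of_indecomposable_summands hC hA0) g f hgf)
  exact ⟨isIso_of_isIso_comp_of_isIso_comp f' g', isIso_of_isIso_comp_of_isIso_comp g' f'⟩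

/-- Given maximal `F`-dense decompositions `A ≅ A_F ⊞ A_0` and `B ≅ B_F ⊞ B_0`, and
morphisms `f : A ⟶ B`, `g : B ⟶ A` such that `F(f)` and `F(g)` are mutually inverse
isomorphisms, the induced morphisms `f' = π_B ∘ f ∘ i_A : A_F ⟶ B_F` and
`g' = π_A ∘ g ∘ i_B : B_F ⟶ A_F` are isomorphisms. -/
theorem statement2
    (hC : IsKrullSchmidtCat C) (hD : IsKrullSchmidtCat D)
    (F : C ⥤ D) [F.Additive] (hF : IsKrullSchmidtFunctor F)
    {A B A_F A_0 B_F B_0 : C}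
    (eA : A ≅ A_F ⊞ A_0) (eB : B ≅ B_F ⊞ B_0)
    (hAF : IsFDense F A_F)
    (hA0 : ∀ X : C, IsIndecomposable X → IsSummand A_0 X → IsZero (F.obj X))
    (hBF : IsFDense F B_F)
    (hB0 : ∀ X : C, IsIndecomposable X → IsSummand B_0 X → IsZero (F.obj X))
    (f : A ⟶ B) (g : B ⟶ A)
    (hfg : F.map f ≫ F.map g = 𝟙 (F.obj A))
    (hgf : F.map g ≫ F.map f = 𝟙 (F.obj B)) :
    -- `i_A = biprod.inl ≫ eA.inv`, `π_B = eB.hom ≫ biprod.fst`, etc.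
    IsIso ((biprod.inl ≫ eA.inv) ≫ f ≫ (eB.hom ≫ biprod.fst)) ∧
    IsIso ((biprod.inl ≫ eB.inv) ≫ g ≫ (eA.hom ≫ biprod.fst)) :=
  statement2_general hC F eA eB hAF hA0 hBF hB0 f g hfg hgf
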